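/- arXiv:1604.07086 — 5 statements merged into one kernel-verified Lean document; each statement's English description precedes it below -/
import Mathlib

section
/- Let K ≥ 1 and N ≥ 1 be integers, let r be a real number with 1 ≤ r ≤ K, and let a_1, …, a_K be nonnegative real numbers satisfying ∑_{j=1}^K a_j = N and ∑_{j=1}^K j·a_j = r·N. Then ∑_{j=1}^K (a_j/N)·(K−j)/(K·j) ≥ (K−r)/(K·r). -/
open Finset

theorem inv_sum_mul_le_sum_div {ι : Type*} {s : Finset ι} {w x : ι → ℝ}
    (hw : ∀ i ∈ s, 0 ≤ w i) (hw₁ : ∑ i ∈ s, w i = 1) (hx : ∀ i ∈ s, 0 < x i) :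
    (∑ i ∈ s, w i * x i)⁻¹ ≤ ∑ i ∈ s, w i / x i := by
  simpa only [smul_eq_mul, div_eq_mul_inv, zpow_neg_one] using
    (convexOn_zpow (-1)).map_sum_le hw hw₁ hx

theorem cdc_converse_integer_envelope_general
    (K N : ℕ) (hK : 1 ≤ K) (hN : 1 ≤ N)
    (r : ℝ) (hr1 : 1 ≤ r)
    (a : ℕ → ℝ) (ha : ∀ j ∈ Finset.Icc 1 K, 0 ≤ a j)
    (hsum : ∑ j ∈ Finset.Icc 1 K, a j = N)
    (hrsum : ∑ j ∈ Finset.Icc 1 K, (j : ℝ) * a j = r * N) :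
    ∑ j ∈ Finset.Icc 1 K, (a j / N) * (((K : ℝ) - j) / (K * j)) ≥
      ((K : ℝ) - r) / (K * r) := by
  have hN₀ : (N : ℝ) ≠ 0 := by positivity
  have hK₀ : (K : ℝ) ≠ 0 := by positivity
  have hj_pos : ∀ j ∈ Icc 1 K, (0 : ℝ) < j := fun j hj => by exact_mod_cast (mem_Icc.1 hj).1
  set p : ℕ → ℝ := fun j => a j / N
  have hp : ∀ j ∈ Icc 1 K, 0 ≤ p j := fun j hj => div_nonneg (ha j hj) N.cast_nonneg
  have hp₁ : ∑ j ∈ Icc 1 K, p j = 1 := by rw [← sum_div, hsum, div_self hN₀]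
  have hp_mean : ∑ j ∈ Icc 1 K, p j * j = r := by
    simp_rw [p, div_mul_eq_mul_div, ← sum_div, mul_comm (a _)]
    rw [hrsum, mul_div_cancel_right₀ _ hN₀]
  calc ∑ j ∈ Icc 1 K, p j * (((K : ℝ) - j) / (K * j))
      = ∑ j ∈ Icc 1 K, p j / j - (K : ℝ)⁻¹ := by
        rw [← mul_one (K : ℝ)⁻¹, ← hp₁, mul_sum, ← sum_sub_distrib]
        refine sum_congr rfl fun j hj => ?_
        rw [mul_comm (K : ℝ), ← inv_sub_inv (hj_pos j hj).ne' hK₀]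
        ring
    _ ≥ r⁻¹ - (K : ℝ)⁻¹ := by
        gcongr
        exact hp_mean ▸ inv_sum_mul_le_sum_div hp hp₁ hj_pos
    _ = ((K : ℝ) - r) / (K * r) := by
        rw [inv_sub_inv (by linarith) hK₀, mul_comm]

/-- Let `K ≥ 1` and `N ≥ 1` be integers, `r` a real number with
`1 ≤ r ≤ K`, and `a 1, …, a K` nonnegative reals with `∑ a j = N` and `∑ j * a j = r * N`.
Then `∑ (a j / N) * (K - j)/(K * j) ≥ (K - r)/(K * r)`. -/
theorem cdc_converse_integer_envelope
    (K N : ℕ) (hK : 1 ≤ K) (hN : 1 ≤ N)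
    (r : ℝ) (hr1 : 1 ≤ r) (hrK : r ≤ K)
    (a : ℕ → ℝ) (ha : ∀ j ∈ Finset.Icc 1 K, 0 ≤ a j)
    (hsum : ∑ j ∈ Finset.Icc 1 K, a j = N)
    (hrsum : ∑ j ∈ Finset.Icc 1 K, (j : ℝ) * a j = r * N) :
    ∑ j ∈ Finset.Icc 1 K, (a j / N) * (((K : ℝ) - j) / (K * j)) ≥
      ((K : ℝ) - r) / (K * r) :=
  cdc_converse_integer_envelope_general K N hK hN r hr1 a ha hsum hrsum
end

section
/- Let K ≥ 1 and N ≥ 1 be integers, let r be a real number with 1 ≤ r ≤ K, write r₁ = ⌊r⌋ and r₂ = ⌈r⌉, and let α ∈ [0,1] satisfy r = α·r₁ + (1−α)·r₂. Let a_1, …, a_K be nonnegative real numbers satisfying ∑_{j=1}^K a_j = N and ∑_{j=1}^K j·a_j = r·N. Then ∑_{j=1}^K (a_j/N)·(K−j)/(K·j) ≥ α·(K−r₁)/(K·r₁) + (1−α)·(K−r₂)/(K·r₂). In other words, the quantity ∑_{j=1}^K (a_j/N)·(K−j)/(K·j) is bounded below by the lower convex envelope of the points {(j, (K−j)/(Kj))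 : j = 1,…,K} evaluated at r. -/
/-!
On `1 ≤ j ≤ K` the summand `(K - j) / (K j) = j⁻¹ - K⁻¹` is convex in `j`, and the secant of
`x ↦ x⁻¹` through `⌊r⌋` and `⌈r⌉` lies below it at every integer, since no integer lies strictly
between `⌊r⌋` and `⌈r⌉`. Averaging that affine minorant against the weights `a j / N`, whose
mean is `r`, yields the value of the secant at `r`, which is the envelope value.
-/

open Finset

lemma sub_floor_mul_sub_ceil_nonneg (j : ℤ) (r : ℝ) :
    0 ≤ ((j : ℝ) - ⌊r⌋) * ((j : ℝ) - ⌈r⌉) := by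
  rcases le_or_gt j ⌊r⌋ with hj | hj
  · have hfloor : (j : ℝ) ≤ ⌊r⌋ := by exact_mod_cast hj
    have hceil : (j : ℝ) ≤ ⌈r⌉ := by exact_mod_cast hj.trans (Int.floor_le_ceil r)
    exact mul_nonneg_of_nonpos_of_nonpos (by linarith) (by linarith)
  · have hceil : (⌈r⌉ : ℝ) ≤ j := by exact_mod_cast (Int.ceil_le_floor_add_one r).trans hj
    have hfloor : (⌊r⌋ : ℝ) ≤ j := by exact_mod_cast hj.le
    exact mul_nonneg (by linarith) (by linarith)

lemma inv_sub_secant_inv {x c d : ℝ} (hx : x ≠ 0) (hc : c ≠ 0) (hd : d ≠ 0) :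
    x⁻¹ - (c⁻¹ + d⁻¹ - (c * d)⁻¹ * x) = (x - c) * (x - d) / (x * c * d) := by
  field_simp
  ring

lemma secant_inv_le_inv {x c d : ℝ} (hx : 0 < x) (hc : 0 < c) (hd : 0 < d)
    (h : 0 ≤ (x - c) * (x - d)) : c⁻¹ + d⁻¹ - (c * d)⁻¹ * x ≤ x⁻¹ := by
  have hgap := inv_sub_secant_inv hx.ne' hc.ne' hd.ne'
  have hgap_nonneg : 0 ≤ (x - c) * (x - d) / (x * c * d) := by positivity
  linarith

lemma secant_inv_convex_combination {c d : ℝ} (hc : c ≠ 0) (hd : d ≠ 0) (α : ℝ) :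
    c⁻¹ + d⁻¹ - (c * d)⁻¹ * (α * c + (1 - α) * d) = α * c⁻¹ + (1 - α) * d⁻¹ := by
  field_simp
  ring

lemma affine_le_weighted_sum {ι : Type*} (s : Finset ι) {w x g : ι → ℝ} {p q r : ℝ}
    (hw : ∀ i ∈ s, 0 ≤ w i) (hw1 : ∑ i ∈ s, w i = 1) (hwx : ∑ i ∈ s, w i * x i = r)
    (hg : ∀ i ∈ s, p + q * x i ≤ g i) :
    p + q * r ≤ ∑ i ∈ s, w i * g i :=
  calc p + q * r = ∑ i ∈ s, w i * (p + q * x i) := by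
        simp only [mul_add, sum_add_distrib, ← sum_mul, hw1, mul_left_comm _ q, ← mul_sum, hwx]
        ring
    _ ≤ ∑ i ∈ s, w i * g i :=
        sum_le_sum fun i hi => mul_le_mul_of_nonneg_left (hg i hi) (hw i hi)

theorem cdc_converse_noninteger_envelope_general
    (K N : ℕ) (hK : 1 ≤ K) (hN : 1 ≤ N)
    (r : ℝ) (hr1 : 1 ≤ r)
    (α : ℝ)
    (hconv : r = α * (⌊r⌋ : ℝ) + (1 - α) * (⌈r⌉ : ℝ))
    (a : ℕ → ℝ) (ha : ∀ j ∈ Finset.Icc 1 K, 0 ≤ a j)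
    (hsum : ∑ j ∈ Finset.Icc 1 K, a j = N)
    (hrsum : ∑ j ∈ Finset.Icc 1 K, (j : ℝ) * a j = r * N) :
    ∑ j ∈ Finset.Icc 1 K, (a j / N) * (((K : ℝ) - j) / (K * j)) ≥
      α * (((K : ℝ) - (⌊r⌋ : ℝ)) / (K * (⌊r⌋ : ℝ))) +
        (1 - α) * (((K : ℝ) - (⌈r⌉ : ℝ)) / (K * (⌈r⌉ : ℝ))) := by
  have hN₀ : (0 : ℝ) < N := by exact_mod_cast hN
  have hK₀ : (K : ℝ) ≠ 0 := Nat.cast_ne_zero.2 (by omega)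
  have hfloor : (0 : ℝ) < ⌊r⌋ := by exact_mod_cast Int.floor_pos.2 (by linarith)
  have hceil : (0 : ℝ) < ⌈r⌉ := by exact_mod_cast Int.ceil_pos.2 (by linarith)
  have hdiv_eq {x : ℝ} (hx : x ≠ 0) : ((K : ℝ) - x) / (K * x) = x⁻¹ - (K : ℝ)⁻¹ := by
    rw [inv_sub_inv hx hK₀, mul_comm]
  have hw1 : ∑ j ∈ Icc 1 K, a j / N = 1 := by rw [← sum_div, hsum, div_self hN₀.ne']
  have hwx : ∑ j ∈ Icc 1 K, a j / N * j = r := by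
    simp only [div_mul_eq_mul_div, mul_comm (a _)]
    rw [← sum_div, hrsum, mul_div_cancel_right₀ _ hN₀.ne']
  have hsecant : ∀ j ∈ Icc 1 K, ((⌊r⌋ : ℝ)⁻¹ + (⌈r⌉ : ℝ)⁻¹ - (K : ℝ)⁻¹) +
      (-((⌊r⌋ : ℝ) * ⌈r⌉)⁻¹) * j ≤ ((K : ℝ) - j) / (K * j) := by
    intro j hj
    have hj : (0 : ℝ) < j := by exact_mod_cast (mem_Icc.1 hj).1
    have hle := secant_inv_le_inv hj hfloor hceil
      (by exact_mod_cast sub_floor_mul_sub_ceil_nonneg j r)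
    rw [hdiv_eq hj.ne']
    linarith
  have hmean := affine_le_weighted_sum _ (fun j hj => div_nonneg (ha j hj) hN₀.le) hw1 hwx hsecant
  rw [ge_iff_le, hdiv_eq hfloor.ne', hdiv_eq hceil.ne']
  have henvelope := secant_inv_convex_combination hfloor.ne' hceil.ne' α
  rw [← hconv] at henvelope
  linarith

/-- Let `K ≥ 1`, `N ≥ 1`, let `r` be real with `1 ≤ r ≤ K`, write
`r₁ = ⌊r⌋`, `r₂ = ⌈r⌉`, and let `α ∈ [0,1]` satisfy `r = α r₁ + (1 - α) r₂`.
If `a 1, …, a K` are nonnegative reals with `∑ a j = N` and `∑ j * a j = r * N`, then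
`∑ (a j / N) * (K - j)/(K * j) ≥ α (K - r₁)/(K r₁) + (1 - α)(K - r₂)/(K r₂)`,
i.e. the sum is bounded below by the lower convex envelope of the points
`(j, (K - j)/(K j))`, `j = 1, …, K`, evaluated at `r`. -/
theorem cdc_converse_noninteger_envelope
    (K N : ℕ) (hK : 1 ≤ K) (hN : 1 ≤ N)
    (r : ℝ) (hr1 : 1 ≤ r) (hrK : r ≤ K)
    (α : ℝ) (hα0 : 0 ≤ α) (hα1 : α ≤ 1)
    (hconv : r = α * (⌊r⌋ : ℝ) + (1 - α) * (⌈r⌉ : ℝ))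
    (a : ℕ → ℝ) (ha : ∀ j ∈ Finset.Icc 1 K, 0 ≤ a j)
    (hsum : ∑ j ∈ Finset.Icc 1 K, a j = N)
    (hrsum : ∑ j ∈ Finset.Icc 1 K, (j : ℝ) * a j = r * N) :
    ∑ j ∈ Finset.Icc 1 K, (a j / N) * (((K : ℝ) - j) / (K * j)) ≥
      α * (((K : ℝ) - (⌊r⌋ : ℝ)) / (K * (⌊r⌋ : ℝ))) +
        (1 - α) * (((K : ℝ) - (⌈r⌉ : ℝ)) / (K * (⌈r⌉ : ℝ))) :=
  cdc_converse_noninteger_envelope_general K N hK hN r hr1 α hconv a ha hsum hrsum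
end

section
/- Let Q, N, K, T be positive integers with K dividing Q, and let Ω be a finite probability space carrying mutually independent random variables V_{q,n}, for q ∈ {1,…,Q} and n ∈ {1,…,N}, each uniformly distributed on a set of size 2^T. Let M_1, …, M_K ⊆ {1,…,N} (file assignment) and let W_1, …, W_K ⊆ {1,…,Q} be pairwise disjoint sets each of size Q/K (reduce assignment). Let X_1, …, X_K be random variables such that X_k = ψ_k((V_{q,n})_{q ∈ {1,…,Q}, n ∈ M_k}) for some function ψ_k, and suppose that for every k there is a function χ_k with (V_{q,n})_{q ∈ W_k, n ∈ {1,…,N}} = χ_k(X_1, …, X_K, (V_{q,n})_{q ∈ {1,…,Q}, n ∈ M_k}) almost surely. For S ⊆ {1,…,K} and integer j, let a^{j,S} be the number of files n such that the set {k : n ∈ M_k} has cardinality j and is contained in S; let X_S = (X_k)_{k∈S} and Y_{S^c} = ((V_{q,n})_{q ∈ ∪_{k∉S} W_k, n ∈ {1,…,N}}, (V_{q,n})_{q ∈ {1,…,Q}, n ∈ ∪_{k∉S} M_k}). Then for every subset S ⊆ {1,…,K}: H[X_S | Y_{S^c}] ≥ T·(Q/K)·(∑_{j=1}^{|S|} a^{j,S}·(|S|−j)/j)·log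 2, where H[·|·] denotes conditional Shannon entropy in nats. -/
/-!
Induction on `|S|`. Fix `k ∈ S`, let `Y = Y_{Sᶜ}` and let `V_{:,M_k}`, `V_{W_k,:}` be the values
node `k` maps and reduces. Since `X_k` is a function both of `X_S` and of `V_{:,M_k}`,
`H[X_S | Y] ≥ H[X_k | Y] + H[X_S | V_{:,M_k}, Y]`. From `(X_S, V_{:,M_k}, Y)` node `k` decodes
`V_{W_k,:}`, so the last term is `H[V_{W_k,:} | V_{:,M_k}, Y] + H[X_{S∖k} | Y_{(S∖k)ᶜ}]`. The
values are i.i.d. uniform, so the first summand is `T log 2 · (Q/K)` times the number of files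
mapped only inside `S ∖ {k}`, and the second is bounded by induction. Summing over `k ∈ S` and
using `H[X_S | Y] ≤ ∑ₖ H[X_k | Y]` gives `(|S| - 1) H[X_S | Y] ≥ (|S| - 1) · bound`, because a
file mapped at `j` nodes, all in `S`, is mapped only inside `S ∖ {k}` for `|S| - j` nodes `k`.
-/

open Finset
open scoped Classical

/-- Shannon entropy (in nats) of a random variable `X` on a finite probability space
with probability mass function `p`. -/
noncomputable def shannonEnt {Ω : Type*} [Fintype Ω] {α : Type*} [Fintype α]
    (p : Ω → ℝ) (X : Ω → α) : ℝ :=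
  ∑ x : α, Real.negMulLog (∑ ω ∈ Finset.univ.filter (fun ω => X ω = x), p ω)

/-- Conditional Shannon entropy (in nats): `H[X | Y] = H[(X,Y)] - H[Y]`. -/
noncomputable def condEnt {Ω : Type*} [Fintype Ω] {α β : Type*} [Fintype α] [Fintype β]
    (p : Ω → ℝ) (X : Ω → α) (Y : Ω → β) : ℝ :=
  shannonEnt p (fun ω => (X ω, Y ω)) - shannonEnt p Y

open Real

namespace Real

lemma negMulLog_sum_le {ι : Type*} (s : Finset ι) {f : ι → ℝ} (hf : ∀ i ∈ s, 0 ≤ f i) :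
    negMulLog (∑ i ∈ s, f i) ≤ ∑ i ∈ s, negMulLog (f i) := by
  have hterm : ∀ i ∈ s, -(f i * log (∑ j ∈ s, f j)) ≤ negMulLog (f i) := fun i hi => by
    rcases (hf i hi).eq_or_lt with h0 | hpos
    · simp [← h0]
    · rw [negMulLog, neg_mul, neg_le_neg_iff]
      exact mul_le_mul_of_nonneg_left (log_le_log hpos (single_le_sum hf hi)) hpos.le
  calc negMulLog (∑ i ∈ s, f i) = ∑ i ∈ s, -(f i * log (∑ j ∈ s, f j)) := by
        rw [sum_neg_distrib, ← sum_mul, negMulLog, neg_mul]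
    _ ≤ ∑ i ∈ s, negMulLog (f i) := sum_le_sum hterm

lemma negMulLog_add_mul_log_le {r q : ℝ} (hr : 0 ≤ r) (hq : 0 ≤ q) (hrq : 0 < r → 0 < q) :
    negMulLog r + r * log q ≤ q - r := by
  rcases hr.eq_or_lt with rfl | hr
  · simpa using hq
  have hq := hrq hr
  calc negMulLog r + r * log q = r * log (q / r) := by
        rw [negMulLog, log_div hq.ne' hr.ne']
        ring
    _ ≤ r * (q / r - 1) := mul_le_mul_of_nonneg_left (log_le_sub_one_of_pos (by positivity)) hr.le
    _ = q - r := by field_simp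

end Real

section Dependence

variable {Ω α β γ : Type*} {p : Ω → ℝ}

def Determines (p : Ω → ℝ) (X : Ω → α) (Y : Ω → β) : Prop :=
  ∃ f : α → β, ∀ ω, 0 < p ω → Y ω = f (X ω)

namespace Determines

variable {X : Ω → α} {Y : Ω → β} {Z : Ω → γ}

lemma refl : Determines p X X := ⟨id, fun _ _ => rfl⟩

lemma fst : Determines p (fun ω => (X ω, Y ω)) X := ⟨Prod.fst, fun _ _ => rfl⟩

lemma snd : Determines p (fun ω => (X ω, Y ω)) Y := ⟨Prod.snd, fun _ _ => rfl⟩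

lemma trans (hXY : Determines p X Y) (hYZ : Determines p Y Z) : Determines p X Z := by
  obtain ⟨f, hf⟩ := hXY
  obtain ⟨g, hg⟩ := hYZ
  exact ⟨g ∘ f, fun ω hω => by rw [hg ω hω, hf ω hω, Function.comp_apply]⟩

lemma pair (hY : Determines p X Y) (hZ : Determines p X Z) :
    Determines p X (fun ω => (Y ω, Z ω)) := by
  obtain ⟨f, hf⟩ := hY
  obtain ⟨g, hg⟩ := hZ
  exact ⟨fun x => (f x, g x), fun ω hω => Prod.ext (hf ω hω) (hg ω hω)⟩

lemma pi {ι : Type*} {β : ι → Type*} {Z : ∀ i, Ω → β i} (h : ∀ i, Determines p X (Z i)) :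
    Determines p X (fun ω i => Z i ω) := by
  choose f hf using h
  exact ⟨fun x i => f i x, fun ω hω => funext fun i => hf i ω hω⟩

end Determines

def tuple {ι : Type*} {β : ι → Type*} (Z : ∀ i, Ω → β i) (S : Finset ι) : Ω → ∀ i : S, β i :=
  fun ω i => Z i ω

variable {ι : Type*} {β : ι → Type*} {Z : ∀ i, Ω → β i} {S : Finset ι}

lemma Determines.tuple {X : Ω → α} (h : ∀ i ∈ S, Determines p X (Z i)) :
    Determines p X (tuple Z S) :=
  Determines.pi fun i => h i.1 i.2

lemma determines_tuple_apply {i : ι} (hi : i ∈ S) : Determines p (tuple Z S) (Z i) :=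
  ⟨fun z => z ⟨i, hi⟩, fun _ _ => rfl⟩

lemma determines_tuple_of_subset {T : Finset ι} (h : T ⊆ S) :
    Determines p (tuple Z S) (tuple Z T) :=
  .tuple fun _ hi => determines_tuple_apply (h hi)

variable [DecidableEq ι] {T : Finset ι}

lemma determines_tuple_union :
    Determines p (fun ω => (tuple Z S ω, tuple Z T ω)) (tuple Z (S ∪ T)) :=
  .tuple fun _ hi => (mem_union.1 hi).elim
    (fun hi => Determines.fst.trans (determines_tuple_apply hi))
    (fun hi => Determines.snd.trans (determines_tuple_apply hi))

lemma determines_pair_of_tuple_union :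
    Determines p (tuple Z (S ∪ T)) (fun ω => (tuple Z S ω, tuple Z T ω)) :=
  (determines_tuple_of_subset subset_union_left).pair
    (determines_tuple_of_subset subset_union_right)

end Dependence

section Entropy

variable {Ω α β γ : Type*} [Fintype Ω] {p : Ω → ℝ}

noncomputable def law (p : Ω → ℝ) (X : Ω → α) (x : α) : ℝ :=
  ∑ ω with X ω = x, p ω

lemma shannonEnt_eq_sum_law [Fintype α] (X : Ω → α) :
    shannonEnt p X = ∑ x, negMulLog (law p X x) := rfl

lemma law_nonneg (hp : ∀ ω, 0 ≤ p ω) (X : Ω → α) (x : α) : 0 ≤ law p X x :=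
  sum_nonneg fun ω _ => hp ω

lemma sum_law [Fintype α] (X : Ω → α) : ∑ x, law p X x = ∑ ω, p ω :=
  sum_fiberwise univ X p

lemma law_comp [Fintype α] (X : Ω → α) (g : α → β) (y : β) :
    law p (fun ω => g (X ω)) y = ∑ x with g x = y, law p X x := by
  unfold law
  rw [← sum_fiberwise_of_maps_to (s := {ω | g (X ω) = y}) (t := {x | g x = y}) (g := X)
    (by simp)]
  refine sum_congr rfl fun x hx => sum_congr ?_ fun _ _ => rfl
  ext ω
  simp only [mem_filter, mem_univ, true_and] at hx ⊢
  exact ⟨And.right, fun h => ⟨h ▸ hx, h⟩⟩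

lemma law_congr_ae (hp : ∀ ω, 0 ≤ p ω) {X Y : Ω → α} (h : ∀ ω, 0 < p ω → X ω = Y ω) :
    law p X = law p Y := by
  funext x
  simp only [law, sum_filter]
  refine sum_congr rfl fun ω _ => ?_
  rcases (hp ω).eq_or_lt with h0 | hpos
  · simp [← h0]
  · rw [h ω hpos]

lemma law_le_law_comp (hp : ∀ ω, 0 ≤ p ω) [Fintype α] (X : Ω → α) (g : α → β) (x : α) :
    law p X x ≤ law p (fun ω => g (X ω)) (g x) := by
  rw [law_comp X g]
  exact single_le_sum (fun x' _ => law_nonneg hp X x') (mem_filter.2 ⟨mem_univ x, rfl⟩)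

lemma sum_law_mul_comp [Fintype α] [Fintype β] (X : Ω → α) (g : α → β) (F : β → ℝ) :
    ∑ x, law p X x * F (g x) = ∑ y, law p (fun ω => g (X ω)) y * F y := by
  simp only [law_comp, sum_mul]
  rw [← sum_fiberwise univ g]
  exact sum_congr rfl fun y _ => sum_congr rfl fun x hx => by rw [(mem_filter.1 hx).2]

lemma sum_law_mul_log_law_comp [Fintype α] [Fintype β] (X : Ω → α) (g : α → β) :
    ∑ x, law p X x * log (law p (fun ω => g (X ω)) (g x)) = -shannonEnt p (fun ω => g (X ω)) := by
  rw [sum_law_mul_comp X g (fun y => log (law p (fun ω => g (X ω)) y)), shannonEnt_eq_sum_law,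
    ← sum_neg_distrib]
  simp [negMulLog]

lemma shannonEnt_le_of_determines (hp : ∀ ω, 0 ≤ p ω) [Fintype α] [Fintype β]
    {X : Ω → α} {Y : Ω → β} (h : Determines p X Y) : shannonEnt p Y ≤ shannonEnt p X := by
  obtain ⟨f, hf⟩ := h
  calc shannonEnt p Y = ∑ y, negMulLog (∑ x with f x = y, law p X x) := by
        rw [shannonEnt_eq_sum_law, law_congr_ae hp hf]
        simp only [law_comp]
    _ ≤ ∑ y, ∑ x with f x = y, negMulLog (law p X x) :=
        sum_le_sum fun y _ => negMulLog_sum_le _ fun x _ => law_nonneg hp X x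
    _ = shannonEnt p X := sum_fiberwise univ f _

lemma shannonEnt_congr (hp : ∀ ω, 0 ≤ p ω) [Fintype α] [Fintype β]
    {X : Ω → α} {Y : Ω → β} (hXY : Determines p X Y) (hYX : Determines p Y X) :
    shannonEnt p X = shannonEnt p Y :=
  (shannonEnt_le_of_determines hp hYX).antisymm (shannonEnt_le_of_determines hp hXY)

lemma sum_law_pair_left [Fintype α] [Fintype γ] (A : Ω → α) (C : Ω → γ) (c : γ) :
    ∑ a, law p (fun ω => (A ω, C ω)) (a, c) = law p C c := by
  rw [show law p C c = law p (fun ω => (A ω, C ω).2) c from rfl, law_comp, sum_filter,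
    Fintype.sum_prod_type_right, Fintype.sum_eq_single c fun x hx => by simp [hx]]
  simp

lemma shannonEnt_submodular (hp : ∀ ω, 0 ≤ p ω) [Fintype α] [Fintype β] [Fintype γ]
    (A : Ω → α) (B : Ω → β) (C : Ω → γ) :
    shannonEnt p (fun ω => (A ω, B ω, C ω)) + shannonEnt p C
      ≤ shannonEnt p (fun ω => (A ω, C ω)) + shannonEnt p (fun ω => (B ω, C ω)) := by
  set X : Ω → α × β × γ := fun ω => (A ω, B ω, C ω)
  set pAC := law p (fun ω => (A ω, C ω))
  set pBC := law p (fun ω => (B ω, C ω))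
  set pC := law p C
  -- Gibbs' inequality against `q = p(a,c) p(b,c) / p(c)`, whose total mass is that of `p`
  set q : α × β × γ → ℝ := fun x => pAC (x.1, x.2.2) * pBC x.2 / pC x.2.2
  have hmarg_pos : ∀ x, 0 < law p X x → 0 < pAC (x.1, x.2.2) ∧ 0 < pBC x.2 ∧ 0 < pC x.2.2 :=
    fun x hx => ⟨hx.trans_le (law_le_law_comp hp X (fun x => (x.1, x.2.2)) x),
      hx.trans_le (law_le_law_comp hp X Prod.snd x),
      hx.trans_le (law_le_law_comp hp X (fun x => x.2.2) x)⟩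
  have hlog : ∀ x, law p X x * log (q x) = law p X x * log (pAC (x.1, x.2.2))
      + law p X x * log (pBC x.2) - law p X x * log (pC x.2.2) := fun x => by
    rcases (law_nonneg hp X x).eq_or_lt with h0 | hpos
    · simp [← h0]
    obtain ⟨hAC, hBC, hC⟩ := hmarg_pos x hpos
    rw [log_div (by positivity) hC.ne', log_mul hAC.ne' hBC.ne']
    ring
  have hq : ∑ x, q x = ∑ x, law p X x := by
    calc ∑ x, q x = ∑ c, (∑ a, pAC (a, c)) * (∑ b, pBC (b, c)) / pC c := by
          simp only [q, Fintype.sum_prod_type, sum_mul_sum, sum_div]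
          conv_rhs => rw [sum_comm]
          exact sum_congr rfl fun _ _ => sum_comm
      _ = ∑ x, law p X x := by
          simp only [pAC, pBC, sum_law_pair_left, mul_self_div_self, pC, sum_law]
  have hgibbs : ∑ x, (negMulLog (law p X x) + law p X x * log (q x)) ≤ 0 := by
    calc ∑ x, (negMulLog (law p X x) + law p X x * log (q x))
        ≤ ∑ x, (q x - law p X x) := sum_le_sum fun x _ =>
          negMulLog_add_mul_log_le (law_nonneg hp X x)
            (div_nonneg (mul_nonneg (law_nonneg hp _ _) (law_nonneg hp _ _)) (law_nonneg hp _ _))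
            fun hx => by obtain ⟨h1, h2, h3⟩ := hmarg_pos x hx; positivity
      _ = 0 := by rw [sum_sub_distrib, hq, sub_self]
  have hAC : ∑ x, law p X x * log (pAC (x.1, x.2.2)) = -shannonEnt p (fun ω => (A ω, C ω)) :=
    sum_law_mul_log_law_comp X (fun x => (x.1, x.2.2))
  have hBC : ∑ x, law p X x * log (pBC x.2) = -shannonEnt p (fun ω => (B ω, C ω)) :=
    sum_law_mul_log_law_comp X Prod.snd
  have hC : ∑ x, law p X x * log (pC x.2.2) = -shannonEnt p C :=
    sum_law_mul_log_law_comp X (fun x => x.2.2)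
  simp only [sum_add_distrib, hlog, sum_sub_distrib, hAC, hBC, hC] at hgibbs
  rw [shannonEnt_eq_sum_law]
  linarith

section Condition

variable [Fintype α] [Fintype β] [Fintype γ] {α' γ' : Type*} [Fintype α'] [Fintype γ']
variable (hp : ∀ ω, 0 ≤ p ω)
include hp

lemma condEnt_congr {A : Ω → α} {A' : Ω → α'} {C : Ω → γ} {C' : Ω → γ'}
    (hA : Determines p (fun ω => (A ω, C ω)) A') (hA' : Determines p (fun ω => (A' ω, C' ω)) A)
    (hC : Determines p C C') (hC' : Determines p C' C) :
    condEnt p A C = condEnt p A' C' := by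
  unfold condEnt
  rw [shannonEnt_congr hp (hA.pair (Determines.snd.trans hC))
      (hA'.pair (Determines.snd.trans hC')), shannonEnt_congr hp hC hC']

lemma condEnt_congr_left {A : Ω → α} {A' : Ω → α'} (C : Ω → γ)
    (hA : Determines p A A') (hA' : Determines p A' A) :
    condEnt p A C = condEnt p A' C :=
  condEnt_congr hp (Determines.fst.trans hA) (Determines.fst.trans hA') .refl .refl

lemma condEnt_congr_right (A : Ω → α) {C : Ω → γ} {C' : Ω → γ'}
    (hC : Determines p C C') (hC' : Determines p C' C) :
    condEnt p A C = condEnt p A C' :=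
  condEnt_congr hp .fst .fst hC hC'

lemma condEnt_nonneg (A : Ω → α) (C : Ω → γ) : 0 ≤ condEnt p A C :=
  sub_nonneg.2 (shannonEnt_le_of_determines hp .snd)

lemma condEnt_eq_zero_of_determines {A : Ω → α} {C : Ω → γ} (h : Determines p C A) :
    condEnt p A C = 0 :=
  sub_eq_zero.2 (shannonEnt_congr hp .snd (h.pair .refl))

lemma condEnt_pair (A : Ω → α) (B : Ω → β) (C : Ω → γ) :
    condEnt p (fun ω => (A ω, B ω)) C
      = condEnt p A C + condEnt p B (fun ω => (A ω, C ω)) := by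
  have h : shannonEnt p (fun ω => ((A ω, B ω), C ω)) = shannonEnt p (fun ω => (B ω, A ω, C ω)) :=
    shannonEnt_congr hp ⟨fun x => (x.1.2, x.1.1, x.2), fun _ _ => rfl⟩
      ⟨fun x => ((x.2.1, x.1), x.2.2), fun _ _ => rfl⟩
  unfold condEnt
  rw [h]
  ring

lemma condEnt_pair_right_le (A : Ω → α) (B : Ω → β) (C : Ω → γ) :
    condEnt p A (fun ω => (B ω, C ω)) ≤ condEnt p A C := by
  have := shannonEnt_submodular hp A B C
  unfold condEnt
  linarith

lemma condEnt_le_of_determines (A : Ω → α) {C : Ω → γ} {C' : Ω → γ'}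
    (h : Determines p C C') : condEnt p A C ≤ condEnt p A C' :=
  calc condEnt p A C = condEnt p A (fun ω => (C ω, C' ω)) :=
        condEnt_congr_right hp A (Determines.refl.pair h) .fst
    _ ≤ condEnt p A C' := condEnt_pair_right_le hp A C C'

lemma condEnt_pair_le (A : Ω → α) (B : Ω → β) (C : Ω → γ) :
    condEnt p (fun ω => (A ω, B ω)) C ≤ condEnt p A C + condEnt p B C := by
  rw [condEnt_pair hp]
  exact add_le_add le_rfl (condEnt_pair_right_le hp B A C)

lemma condEnt_add_condEnt_le_of_determines {δ : Type*} [Fintype δ] {A : Ω → α} {B : Ω → β}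
    {Z : Ω → δ} (C : Ω → γ) (hA : Determines p A Z) (hB : Determines p B Z) :
    condEnt p Z C + condEnt p A (fun ω => (B ω, C ω)) ≤ condEnt p A C := by
  have hswap := condEnt_congr_left hp C (A := fun ω => (A ω, B ω)) (A' := fun ω => (B ω, A ω))
    ⟨Prod.swap, fun _ _ => rfl⟩ ⟨Prod.swap, fun _ _ => rfl⟩
  have hBZ := condEnt_congr_left hp C (hB.pair .refl) .snd
  have hmono := condEnt_le_of_determines hp B
    (C := fun ω => (A ω, C ω)) (C' := fun ω => (Z ω, C ω)) ((Determines.fst.trans hA).pair .snd)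
  rw [condEnt_pair hp, condEnt_pair hp] at hswap
  rw [condEnt_pair hp] at hBZ
  linarith

lemma condEnt_eq_add_of_determines {A : Ω → α} {B : Ω → β} {C : Ω → γ}
    (h : Determines p (fun ω => (A ω, C ω)) B) :
    condEnt p A C = condEnt p B C + condEnt p A (fun ω => (B ω, C ω)) := by
  rw [← condEnt_pair hp]
  exact condEnt_congr hp (h.pair .fst) (Determines.fst.trans .snd) .refl .refl

lemma condEnt_tuple_erase {ι : Type*} [DecidableEq ι] {β : ι → Type*} [∀ i, Fintype (β i)]
    {Z : ∀ i, Ω → β i} {S : Finset ι} {k : ι} {C : Ω → γ} (hk : k ∈ S)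
    (h : Determines p C (Z k)) :
    condEnt p (tuple Z S) C = condEnt p (tuple Z (S.erase k)) C :=
  condEnt_congr hp (Determines.fst.trans (determines_tuple_of_subset (erase_subset k S)))
    (.tuple fun i hi => by
      obtain rfl | hik := eq_or_ne i k
      · exact Determines.snd.trans h
      · exact Determines.fst.trans (determines_tuple_apply (mem_erase.2 ⟨hik, hi⟩)))
    .refl .refl

lemma condEnt_tuple_le_sum {ι : Type*} [DecidableEq ι] {β : ι → Type*} [∀ i, Fintype (β i)]
    (Z : ∀ i, Ω → β i) (S : Finset ι) (C : Ω → γ) :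
    condEnt p (tuple Z S) C ≤ ∑ i ∈ S, condEnt p (Z i) C := by
  induction S using Finset.induction_on with
  | empty =>
    rw [sum_empty, condEnt_eq_zero_of_determines hp (.tuple fun i hi => absurd hi (notMem_empty i))]
  | insert a S ha ih =>
    have hsplit : Determines p (fun ω => (Z a ω, tuple Z S ω)) (tuple Z (insert a S)) :=
      .tuple fun i hi => by
        rcases mem_insert.1 hi with rfl | hi
        · exact .fst
        · exact Determines.snd.trans (determines_tuple_apply hi)
    rw [condEnt_congr_left hp C ((determines_tuple_apply (mem_insert_self a S)).pair
      (determines_tuple_of_subset (subset_insert a S))) hsplit, sum_insert ha]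
    exact (condEnt_pair_le hp _ _ C).trans (add_le_add le_rfl ih)

variable (hp1 : ∑ ω, p ω = 1)
include hp1

lemma condEnt_unit (A : Ω → α) : condEnt p A (fun _ => ()) = shannonEnt p A := by
  unfold condEnt
  rw [shannonEnt_congr hp .fst ⟨fun a => (a, ()), fun _ _ => rfl⟩]
  simp [shannonEnt_eq_sum_law, law, hp1]

lemma shannonEnt_pair_le (A : Ω → α) (B : Ω → β) :
    shannonEnt p (fun ω => (A ω, B ω)) ≤ shannonEnt p A + shannonEnt p B := by
  simpa only [condEnt_unit hp hp1] using condEnt_pair_le hp A B (fun _ => ())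

lemma shannonEnt_tuple_le_sum {ι : Type*} [DecidableEq ι] {β : ι → Type*}
    [∀ i, Fintype (β i)] (Z : ∀ i, Ω → β i) (S : Finset ι) :
    shannonEnt p (tuple Z S) ≤ ∑ i ∈ S, shannonEnt p (Z i) := by
  simpa only [condEnt_unit hp hp1] using condEnt_tuple_le_sum hp Z S (fun _ => ())

end Condition

section Uniform

variable [Fintype α]

lemma shannonEnt_eq_log_card {X : Ω → α} (h : ∀ x, law p X x = (Fintype.card α : ℝ)⁻¹) :
    shannonEnt p X = log (Fintype.card α) := by
  rw [shannonEnt_eq_sum_law]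
  simp only [h, sum_const, card_univ, nsmul_eq_mul, negMulLog, log_inv]
  rcases eq_or_ne (Fintype.card α : ℝ) 0 with h0 | h0
  · simp [h0]
  · field_simp

variable (hp : ∀ ω, 0 ≤ p ω) (hp1 : ∑ ω, p ω = 1)
variable {ι : Type*} [Fintype ι] [DecidableEq ι] {Z : ι → Ω → α}
variable (hunif : ∀ i x, law p (Z i) x = (Fintype.card α : ℝ)⁻¹)
variable (hjoint : ∀ x, law p (fun ω i => Z i ω) x = ((Fintype.card α : ℝ) ^ Fintype.card ι)⁻¹)
include hp hp1 hunif hjoint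

lemma shannonEnt_tuple_of_uniform (C : Finset ι) :
    shannonEnt p (tuple Z C) = #C * log (Fintype.card α) := by
  -- subadditivity bounds `H[Z_C]` and `H[Z_Cᶜ]` above, the joint entropy bounds their sum below
  have hle : ∀ D : Finset ι, shannonEnt p (tuple Z D) ≤ #D * log (Fintype.card α) := fun D => by
    simpa [shannonEnt_eq_log_card (hunif _)] using shannonEnt_tuple_le_sum hp hp1 Z D
  have hfull : shannonEnt p (fun ω i => Z i ω) = Fintype.card ι * log (Fintype.card α) := by
    rw [shannonEnt_eq_log_card (by simpa [Fintype.card_fun] using hjoint), Fintype.card_fun,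
      Nat.cast_pow, log_pow]
  have hsplit : shannonEnt p (fun ω i => Z i ω)
      ≤ shannonEnt p (tuple Z C) + shannonEnt p (tuple Z Cᶜ) := by
    have hrestrict : ∀ D : Finset ι, Determines p (fun ω i => Z i ω) (tuple Z D) :=
      fun D => .tuple fun i _ => ⟨fun z => z i, fun _ _ => rfl⟩
    rw [shannonEnt_congr hp ((hrestrict C).pair (hrestrict Cᶜ)) (Determines.pi fun i =>
      if hi : i ∈ C then Determines.fst.trans (determines_tuple_apply hi)
      else Determines.snd.trans (determines_tuple_apply (mem_compl.2 hi)))]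
    exact shannonEnt_pair_le hp hp1 _ _
  have hcompl : (#Cᶜ : ℝ) = Fintype.card ι - #C := by
    rw [card_compl, Nat.cast_sub (card_le_univ C)]
  have := hle Cᶜ
  rw [hcompl] at this
  linarith [hle C]

lemma condEnt_tuple_of_uniform (A B : Finset ι) :
    condEnt p (tuple Z A) (tuple Z B) = #(A \ B) * log (Fintype.card α) := by
  unfold condEnt
  rw [shannonEnt_congr hp (determines_tuple_union (Z := Z) (S := A) (T := B))
    determines_pair_of_tuple_union,
    shannonEnt_tuple_of_uniform hp hp1 hunif hjoint,
    shannonEnt_tuple_of_uniform hp hp1 hunif hjoint, ← card_sdiff_add_card]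
  push_cast
  ring

end Uniform

end Entropy

section Assignment

variable {ι ν κ : Type*} [Fintype ι] [Fintype ν] [Fintype κ] [DecidableEq ι] [DecidableEq ν]
  [DecidableEq κ] (M : κ → Finset ν) (W : κ → Finset ι)

def mappers (n : ν) : Finset κ := {k | n ∈ M k}

def filesWithin (S : Finset κ) : Finset ν := {n | mappers M n ⊆ S}

/-- The coordinates `(q, n)` of the intermediate values making up `Y_{Sᶜ}`. -/
def outsideCoords (S : Finset κ) : Finset (ι × ν) :=
  (Sᶜ.biUnion W) ×ˢ univ ∪ univ ×ˢ (Sᶜ.biUnion M)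

/-- The right-hand side of the claim without the factor `T (Q/K) log 2`, summed file by file;
a file mapped nowhere contributes `0` through `x / 0 = 0`. -/
noncomputable def claimBound (S : Finset κ) : ℝ :=
  ∑ n ∈ filesWithin M S, ((#S : ℝ) - #(mappers M n)) / #(mappers M n)

variable {M W} {S : Finset κ} {k : κ}

omit [Fintype ν] [DecidableEq κ] in
@[simp] lemma mem_mappers {n : ν} : k ∈ mappers M n ↔ n ∈ M k := by simp [mappers]

@[simp] lemma mem_filesWithin {n : ν} : n ∈ filesWithin M S ↔ mappers M n ⊆ S := by
  simp [filesWithin]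

omit [Fintype ν] in
lemma notMem_biUnion_compl {n : ν} : n ∉ Sᶜ.biUnion M ↔ mappers M n ⊆ S := by
  simp only [mem_biUnion, mem_compl, not_exists, not_and, subset_iff, mem_mappers]
  exact forall_congr' fun k => ⟨fun h hn => by_contra fun hk => h hk hn, fun h hk hn => hk (h hn)⟩

lemma product_subset_outsideCoords {i : κ} (hi : i ∉ S) :
    univ ×ˢ M i ⊆ outsideCoords M W S := fun _ hc =>
  mem_union_right _ (mem_product.2 ⟨mem_univ _, mem_biUnion.2 ⟨i, mem_compl.2 hi,
    (mem_product.1 hc).2⟩⟩)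

lemma outsideCoords_erase (hk : k ∈ S) :
    W k ×ˢ univ ∪ (univ ×ˢ M k ∪ outsideCoords M W S) = outsideCoords M W (S.erase k) := by
  have hcompl : (S.erase k)ᶜ = insert k Sᶜ := by
    ext i
    by_cases h : i = k <;> simp [h, hk]
  ext c
  simp only [outsideCoords, hcompl, biUnion_insert, mem_union, mem_product, mem_univ, true_and,
    and_true]
  tauto

lemma sdiff_outsideCoords (hWdisj : ∀ j k, j ≠ k → Disjoint (W j) (W k)) (hk : k ∈ S) :
    W k ×ˢ univ \ (univ ×ˢ M k ∪ outsideCoords M W S) = W k ×ˢ filesWithin M (S.erase k) := by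
  ext ⟨q, n⟩
  have hq : q ∈ W k → q ∉ Sᶜ.biUnion W := fun hqk hq => by
    obtain ⟨j, hj, hqj⟩ := mem_biUnion.1 hq
    exact disjoint_left.1 (hWdisj j k (ne_of_mem_of_not_mem hk (mem_compl.1 hj)).symm) hqj hqk
  simp only [outsideCoords, mem_sdiff, mem_union, mem_product, mem_univ, true_and, and_true,
    not_or, mem_filesWithin, subset_erase, ← notMem_biUnion_compl, mem_mappers]
  tauto

lemma sum_sum_filesWithin_erase (f : ν → ℝ) :
    ∑ k ∈ S, ∑ n ∈ filesWithin M (S.erase k), f n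
      = ∑ n ∈ filesWithin M S, #(S \ mappers M n) * f n := by
  rw [sum_comm' (t' := filesWithin M S) (s' := fun n => S \ mappers M n) fun k n => by
    simp only [mem_filesWithin, subset_erase, mem_sdiff]
    tauto]
  simp only [sum_const, nsmul_eq_mul]

lemma claimBound_eq_zero (hS : #S ≤ 1) : claimBound M S = 0 :=
  sum_eq_zero fun n hn => by
    have hle := card_le_card (mem_filesWithin.1 hn)
    rcases Nat.le_one_iff_eq_zero_or_eq_one.1 (hle.trans hS) with h | h
    · simp [h]
    · have : #S = 1 := by omega
      simp [h, this]

lemma sub_one_mul_claimBound_le :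
    (#S - 1) * claimBound M S
      ≤ ∑ k ∈ S, (#(filesWithin M (S.erase k)) : ℝ) + ∑ k ∈ S, claimBound M (S.erase k) := by
  have hfiles : ∑ k ∈ S, (#(filesWithin M (S.erase k)) : ℝ)
      = ∑ n ∈ filesWithin M S, (#(S \ mappers M n) : ℝ) * 1 := by
    rw [← sum_sum_filesWithin_erase]
    simp
  have herase : ∑ k ∈ S, claimBound M (S.erase k) = ∑ n ∈ filesWithin M S,
      #(S \ mappers M n) * (((#S : ℝ) - 1 - #(mappers M n)) / #(mappers M n)) := by
    rw [← sum_sum_filesWithin_erase]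
    refine sum_congr rfl fun k hk => ?_
    rw [claimBound, card_erase_of_mem hk, Nat.cast_pred (card_pos.2 ⟨k, hk⟩)]
  rw [hfiles, herase, claimBound, mul_sum, ← sum_add_distrib]
  refine sum_le_sum fun n hn => ?_
  have hsub := mem_filesWithin.1 hn
  rw [card_sdiff_of_subset hsub, Nat.cast_sub (card_le_card hsub)]
  rcases (Nat.cast_nonneg (α := ℝ) #(mappers M n)).eq_or_lt with h0 | hpos
  · simp [← h0]
  · exact le_of_eq (by field_simp; ring)

lemma claimBound_eq_sum_Icc (S : Finset κ) :
    claimBound M S = ∑ j ∈ Icc 1 #S,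
      (#({n | mappers M n ⊆ S ∧ #(mappers M n) = j} : Finset ν) : ℝ) * (((#S : ℝ) - j) / j) := by
  have hfiber : ∀ j : ℕ, (#({n | mappers M n ⊆ S ∧ #(mappers M n) = j} : Finset ν) : ℝ)
      * (((#S : ℝ) - j) / j)
      = ∑ n ∈ filesWithin M S, if #(mappers M n) = j then ((#S : ℝ) - j) / j else 0 := by
    intro j
    rw [sum_ite, sum_const_zero, add_zero, sum_const, nsmul_eq_mul, filesWithin, filter_filter]
  simp only [hfiber]
  rw [sum_comm, claimBound]
  refine sum_congr rfl fun n hn => ?_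
  rw [sum_ite_eq]
  split_ifs with h
  · rfl
  · have : #(mappers M n) = 0 := by
      have := card_le_card (mem_filesWithin.1 hn)
      simp only [mem_Icc, not_and_or, not_le] at h
      omega
    simp [this]

end Assignment

section Claim

variable {Ω α ι ν κ : Type*} [Fintype Ω] [Fintype α] [Fintype ι] [Fintype ν] [Fintype κ]
  [DecidableEq ι] [DecidableEq ν] [DecidableEq κ] {p : Ω → ℝ} {V : ι × ν → Ω → α}
  {M : κ → Finset ν} {W : κ → Finset ι} {β : κ → Type*} [∀ k, Fintype (β k)] {X : ∀ k, Ω → β k}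
  (hp : ∀ ω, 0 ≤ p ω) (hp1 : ∑ ω, p ω = 1)
  (hunif : ∀ c x, law p (V c) x = (Fintype.card α : ℝ)⁻¹)
  (hjoint : ∀ x, law p (fun ω c => V c ω) x = ((Fintype.card α : ℝ) ^ Fintype.card (ι × ν))⁻¹)
  (hWdisj : ∀ j k, j ≠ k → Disjoint (W j) (W k))
  (hmap : ∀ k, Determines p (tuple V (univ ×ˢ M k)) (X k))
  (hdec : ∀ k, Determines p (fun ω => ((fun i => X i ω), tuple V (univ ×ˢ M k) ω))
    (tuple V (W k ×ˢ univ)))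
include hp hp1 hunif hjoint hWdisj hmap hdec

lemma condEnt_tuple_ge_of_mem {S : Finset κ} {k : κ} (hk : k ∈ S) :
    #(W k) * log (Fintype.card α) * #(filesWithin M (S.erase k))
      + condEnt p (tuple X (S.erase k)) (tuple V (outsideCoords M W (S.erase k)))
      + condEnt p (X k) (tuple V (outsideCoords M W S))
      ≤ condEnt p (tuple X S) (tuple V (outsideCoords M W S)) := by
  set Y := tuple V (outsideCoords M W S)
  set Mk := tuple V (univ ×ˢ M k)
  set Wk := tuple V (W k ×ˢ univ)
  have hcommon : condEnt p (X k) Y + condEnt p (tuple X S) (fun ω => (Mk ω, Y ω))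
      ≤ condEnt p (tuple X S) Y :=
    condEnt_add_condEnt_le_of_determines hp Y (determines_tuple_apply hk) (hmap k)
  have hmessages : Determines p (fun ω => (tuple X S ω, Mk ω, Y ω)) (fun ω i => X i ω) :=
    .pi fun i => if hi : i ∈ S then Determines.fst.trans (determines_tuple_apply hi)
      else (Determines.snd.trans .snd).trans
        ((determines_tuple_of_subset (product_subset_outsideCoords hi)).trans (hmap i))
  have hdecode := condEnt_eq_add_of_determines hp
    ((hmessages.pair (Determines.snd.trans .fst)).trans (hdec k))
  have hgain : condEnt p Wk (fun ω => (Mk ω, Y ω))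
      = #(W k) * log (Fintype.card α) * #(filesWithin M (S.erase k)) := by
    refine (condEnt_congr_right hp Wk determines_tuple_union
      determines_pair_of_tuple_union).trans ?_
    rw [condEnt_tuple_of_uniform hp hp1 hunif hjoint, sdiff_outsideCoords hWdisj hk, card_product]
    push_cast
    ring
  have hrest : condEnt p (tuple X S) (fun ω => (Wk ω, Mk ω, Y ω))
      = condEnt p (tuple X (S.erase k)) (tuple V (outsideCoords M W (S.erase k))) := by
    rw [condEnt_tuple_erase hp hk ((Determines.snd.trans .fst).trans (hmap k)),
      ← outsideCoords_erase hk]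
    exact condEnt_congr_right hp _
      ((Determines.fst.pair (Determines.snd.trans determines_tuple_union)).trans
        determines_tuple_union)
      (determines_pair_of_tuple_union.trans
        (Determines.fst.pair (Determines.snd.trans determines_pair_of_tuple_union)))
  linarith

lemma claimBound_le_condEnt {w : ℕ} (hWcard : ∀ k, #(W k) = w) (S : Finset κ) :
    w * log (Fintype.card α) * claimBound M S
      ≤ condEnt p (tuple X S) (tuple V (outsideCoords M W S)) := by
  induction S using Finset.strongInduction with
  | H S ih =>
  set c : ℝ := w * log (Fintype.card α)
  by_cases hS : #S ≤ 1
  · rw [claimBound_eq_zero hS, mul_zero]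
    exact condEnt_nonneg hp _ _
  have hstep : ∑ k ∈ S, (c * #(filesWithin M (S.erase k))
      + condEnt p (tuple X (S.erase k)) (tuple V (outsideCoords M W (S.erase k)))
      + condEnt p (X k) (tuple V (outsideCoords M W S)))
      ≤ #S * condEnt p (tuple X S) (tuple V (outsideCoords M W S)) := by
    refine (sum_le_sum fun k hk => ?_).trans_eq (by rw [sum_const, nsmul_eq_mul])
    simpa only [hWcard] using condEnt_tuple_ge_of_mem hp hp1 hunif hjoint hWdisj hmap hdec hk
  have hsub := condEnt_tuple_le_sum hp X S (tuple V (outsideCoords M W S))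
  have hih : ∑ k ∈ S, c * claimBound M (S.erase k)
      ≤ ∑ k ∈ S, condEnt p (tuple X (S.erase k)) (tuple V (outsideCoords M W (S.erase k))) :=
    sum_le_sum fun k hk => ih _ (erase_ssubset hk)
  have hcomb := mul_le_mul_of_nonneg_left (sub_one_mul_claimBound_le (M := M) (S := S))
    (by positivity : 0 ≤ c)
  rw [mul_add, mul_sum, mul_sum] at hcomb
  rw [sum_add_distrib, sum_add_distrib] at hstep
  have hS2 : (1 : ℝ) < #S := by exact_mod_cast not_le.1 hS
  refine le_of_mul_le_mul_left ?_ (sub_pos.2 hS2)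
  linarith

end Claim

section Curried

variable {Ω α ι ν : Type*} {p : Ω → ℝ} {V : ι → ν → Ω → α}

lemma law_uncurry_of_indep [Fintype Ω] [Fintype α] [Fintype ι] [Fintype ν]
    (hunif : ∀ q n x, law p (V q n) x = (Fintype.card α : ℝ)⁻¹)
    (hindep : ∀ x : ι → ν → α, law p (fun ω q n => V q n ω) x = ∏ q, ∏ n, law p (V q n) (x q n))
    (x : ι × ν → α) :
    law p (fun ω c => Function.uncurry V c ω) x
      = ((Fintype.card α : ℝ) ^ Fintype.card (ι × ν))⁻¹ := by
  have hcurry : law p (fun ω c => Function.uncurry V c ω) x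
      = law p (fun ω q n => V q n ω) (Function.curry x) := by
    simp only [law, funext_iff, Prod.forall, Function.uncurry_apply_pair, Function.curry_apply]
  rw [hcurry, hindep]
  simp only [hunif, prod_const, card_univ, Fintype.card_prod, ← pow_mul, inv_pow, mul_comm]

lemma determines_tuple_univ_prod [Fintype ι] (F : Finset ν) :
    Determines p (tuple (Function.uncurry V) (univ ×ˢ F)) (fun ω (q : ι) (n : F) => V q n ω) :=
  ⟨fun t q n => t ⟨(q, n), mem_product.2 ⟨mem_univ q, n.2⟩⟩, fun _ _ => rfl⟩

lemma determines_tuple_prod_univ [Fintype ν] (E : Finset ι) :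
    Determines p (tuple (Function.uncurry V) (E ×ˢ univ)) (fun ω (q : E) (n : ν) => V q n ω) :=
  ⟨fun t q n => t ⟨(q, n), mem_product.2 ⟨q.2, mem_univ n⟩⟩, fun _ _ => rfl⟩

lemma determines_curried_univ_prod [Fintype ι] (F : Finset ν) :
    Determines p (fun ω (q : ι) (n : F) => V q n ω) (tuple (Function.uncurry V) (univ ×ˢ F)) :=
  ⟨fun v c => v c.1.1 ⟨c.1.2, (mem_product.1 c.2).2⟩, fun _ _ => rfl⟩

lemma determines_curried_prod_univ [Fintype ν] (E : Finset ι) :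
    Determines p (fun ω (q : E) (n : ν) => V q n ω) (tuple (Function.uncurry V) (E ×ˢ univ)) :=
  ⟨fun v c => v ⟨c.1.1, (mem_product.1 c.2).1⟩ c.1.2, fun _ _ => rfl⟩

lemma condEnt_curried_eq_tuple [Fintype Ω] [Fintype α] [Fintype ι] [Fintype ν] [DecidableEq ι]
    [DecidableEq ν] (hp : ∀ ω, 0 ≤ p ω) {δ : Type*} [Fintype δ] (A : Ω → δ) (E : Finset ι)
    (F : Finset ν) :
    condEnt p A (fun ω => ((fun (q : E) (n : ν) => V q n ω), (fun (q : ι) (n : F) => V q n ω)))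
      = condEnt p A (tuple (Function.uncurry V) (E ×ˢ univ ∪ univ ×ˢ F)) :=
  condEnt_congr_right hp A
    (((Determines.fst.trans (determines_curried_prod_univ E)).pair
      (Determines.snd.trans (determines_curried_univ_prod F))).trans determines_tuple_union)
    (determines_pair_of_tuple_union.trans
      ((Determines.fst.trans (determines_tuple_prod_univ E)).pair
        (Determines.snd.trans (determines_tuple_univ_prod F))))

end Curried

theorem cdc_claim1_entropy_lower_bound_general
    {Ω : Type*} [Fintype Ω] (p : Ω → ℝ)
    (hp : ∀ ω, 0 ≤ p ω) (hp1 : ∑ ω, p ω = 1)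
    (Q N K T : ℕ) (hKQ : K ∣ Q)
    {α : Type*} [Fintype α] (hcard : Fintype.card α = 2 ^ T)
    (V : Fin Q → Fin N → Ω → α)
    (hunif : ∀ q n (x : α),
      ∑ ω ∈ Finset.univ.filter (fun ω => V q n ω = x), p ω = 1 / 2 ^ T)
    (hindep : ∀ x : Fin Q → Fin N → α,
      ∑ ω ∈ Finset.univ.filter (fun ω => ∀ q n, V q n ω = x q n), p ω
        = ∏ q, ∏ n, ∑ ω ∈ Finset.univ.filter (fun ω => V q n ω = x q n), p ω)
    (M : Fin K → Finset (Fin N)) (W : Fin K → Finset (Fin Q))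
    (hWdisj : ∀ j k, j ≠ k → Disjoint (W j) (W k))
    (hWcard : ∀ k, (W k).card = Q / K)
    (β : Fin K → Type*) [∀ k, Fintype (β k)]
    (X : ∀ k, Ω → β k)
    (hmap : ∀ k, ∃ ψ : (Fin Q → {n // n ∈ M k} → α) → β k,
      ∀ ω, X k ω = ψ (fun q n => V q n.1 ω))
    (hdec : ∀ k, ∃ χ : (∀ i, β i) → (Fin Q → {n // n ∈ M k} → α) →
        ({q // q ∈ W k} → Fin N → α),
      ∀ ω, 0 < p ω →
        (fun (q : {q // q ∈ W k}) (n : Fin N) => V q.1 n ω)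
          = χ (fun i => X i ω) (fun q n => V q n.1 ω))
    (S : Finset (Fin K)) :
    condEnt p
        (fun ω (k : {k // k ∈ S}) => X k.1 ω)
        (fun ω =>
          ((fun (q : {q // q ∈ Sᶜ.biUnion W}) (n : Fin N) => V q.1 n ω),
           (fun (q : Fin Q) (n : {n // n ∈ Sᶜ.biUnion M}) => V q n.1 ω)))
      ≥ (T : ℝ) * ((Q : ℝ) / (K : ℝ)) *
          (∑ j ∈ Finset.Icc 1 S.card,
            ((Finset.univ.filter (fun n : Fin N =>
                (Finset.univ.filter (fun k => n ∈ M k)) ⊆ S ∧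
                (Finset.univ.filter (fun k => n ∈ M k)).card = j)).card : ℝ) *
              (((S.card : ℝ) - j) / (j : ℝ))) * Real.log 2 := by
  have hunif' : ∀ q n x, law p (V q n) x = (Fintype.card α : ℝ)⁻¹ := fun q n x => by
    rw [hcard, Nat.cast_pow, Nat.cast_ofNat, ← one_div]
    exact hunif q n x
  have hindep' : ∀ x, law p (fun ω q n => V q n ω) x = ∏ q, ∏ n, law p (V q n) (x q n) :=
    fun x => by simpa only [law, funext_iff] using hindep x
  have hmap' : ∀ k, Determines p (tuple (Function.uncurry V) (univ ×ˢ M k)) (X k) := fun k => by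
    obtain ⟨ψ, hψ⟩ := hmap k
    exact (determines_tuple_univ_prod _).trans ⟨ψ, fun ω _ => hψ ω⟩
  have hdec' : ∀ k, Determines p
      (fun ω => ((fun i => X i ω), tuple (Function.uncurry V) (univ ×ˢ M k) ω))
      (tuple (Function.uncurry V) (W k ×ˢ univ)) := fun k => by
    obtain ⟨χ, hχ⟩ := hdec k
    refine (Determines.fst.pair (Determines.snd.trans (determines_tuple_univ_prod _))).trans
      (Determines.trans ?_ (determines_curried_prod_univ _))
    exact ⟨fun z => χ z.1 z.2, hχ⟩
  have hmain := claimBound_le_condEnt hp hp1 (fun c => hunif' c.1 c.2)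
    (law_uncurry_of_indep hunif' hindep') hWdisj hmap' hdec' hWcard S
  rw [ge_iff_le, condEnt_curried_eq_tuple hp]
  refine Eq.trans_le ?_ hmain
  rw [claimBound_eq_sum_Icc, Nat.cast_div_charZero hKQ, hcard, Nat.cast_pow, log_pow]
  unfold mappers
  push_cast
  ring

/-- **Claim 1 of the paper.** In the distributed computing framework with
`Q` output functions, `N` input files, `K` nodes (`K ∣ Q`), i.i.d. intermediate values
`V q n` uniform on a set of size `2^T`, file assignment `M`, disjoint reduce assignment
`W` with `|W k| = Q/K`, messages `X k` computed from node `k`'s Map outputs, and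
decodability of `(V q n)_{q ∈ W k}` at node `k`: for every `S ⊆ {1,…,K}`,
`H[X_S | Y_{Sᶜ}] ≥ T (Q/K) (∑_{j=1}^{|S|} a^{j,S} (|S|-j)/j) log 2`. -/
theorem cdc_claim1_entropy_lower_bound
    {Ω : Type*} [Fintype Ω] (p : Ω → ℝ)
    (hp : ∀ ω, 0 ≤ p ω) (hp1 : ∑ ω, p ω = 1)
    (Q N K T : ℕ) (hQ : 0 < Q) (hN : 0 < N) (hK : 0 < K) (hT : 0 < T) (hKQ : K ∣ Q)
    {α : Type*} [Fintype α] (hcard : Fintype.card α = 2 ^ T)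
    (V : Fin Q → Fin N → Ω → α)
    (hunif : ∀ q n (x : α),
      ∑ ω ∈ Finset.univ.filter (fun ω => V q n ω = x), p ω = 1 / 2 ^ T)
    (hindep : ∀ x : Fin Q → Fin N → α,
      ∑ ω ∈ Finset.univ.filter (fun ω => ∀ q n, V q n ω = x q n), p ω
        = ∏ q, ∏ n, ∑ ω ∈ Finset.univ.filter (fun ω => V q n ω = x q n), p ω)
    (M : Fin K → Finset (Fin N)) (W : Fin K → Finset (Fin Q))
    (hWdisj : ∀ j k, j ≠ k → Disjoint (W j) (W k))
    (hWcard : ∀ k, (W k).card = Q / K)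
    (β : Fin K → Type*) [∀ k, Fintype (β k)]
    (X : ∀ k, Ω → β k)
    (hmap : ∀ k, ∃ ψ : (Fin Q → {n // n ∈ M k} → α) → β k,
      ∀ ω, X k ω = ψ (fun q n => V q n.1 ω))
    (hdec : ∀ k, ∃ χ : (∀ i, β i) → (Fin Q → {n // n ∈ M k} → α) →
        ({q // q ∈ W k} → Fin N → α),
      ∀ ω, 0 < p ω →
        (fun (q : {q // q ∈ W k}) (n : Fin N) => V q.1 n ω)
          = χ (fun i => X i ω) (fun q n => V q n.1 ω))
    (S : Finset (Fin K)) :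
    condEnt p
        (fun ω (k : {k // k ∈ S}) => X k.1 ω)
        (fun ω =>
          ((fun (q : {q // q ∈ Sᶜ.biUnion W}) (n : Fin N) => V q.1 n ω),
           (fun (q : Fin Q) (n : {n // n ∈ Sᶜ.biUnion M}) => V q n.1 ω)))
      ≥ (T : ℝ) * ((Q : ℝ) / (K : ℝ)) *
          (∑ j ∈ Finset.Icc 1 S.card,
            ((Finset.univ.filter (fun n : Fin N =>
                (Finset.univ.filter (fun k => n ∈ M k)) ⊆ S ∧
                (Finset.univ.filter (fun k => n ∈ M k)).card = j)).card : ℝ) *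
              (((S.card : ℝ) - j) / (j : ℝ))) * Real.log 2 :=
  cdc_claim1_entropy_lower_bound_general p hp hp1 Q N K T hKQ hcard V hunif hindep M W hWdisj hWcard
    β X hmap hdec S
end

section
/- Let S₀ ≥ 1, s ≥ 2, and j be integers with 1 ≤ j ≤ S₀ + 1. Then, as an identity of real (or rational) numbers, ((S₀+1−j)/S₀)·( ∑_{ℓ = max(j,s)}^{min(j+s, S₀)} C(S₀−j, ℓ−j)·C(j, ℓ−s)·(ℓ−j)/(ℓ−1) + C(S₀, s−1) ) = ∑_{ℓ = max(j,s)}^{min(j+s, S₀+1)} C(S₀+1−j, ℓ−j)·C(j, ℓ−s)·(ℓ−j)/(ℓ−1), where C(·,·) denotes the binomial coefficient (equal to 0 when the lower argument is negative or exceeds the upper argument), and empty sums are 0. -/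
open Finset

lemma natlem (n j b : ℕ) :
    (n + j) * ((b + 1) * Nat.choose (n + 1) (b + 1)) =
      (n + 1) * ((b + 1) * Nat.choose n (b + 1) + (b + j) * Nat.choose n b) := by
  have h1 : (b + 1) * Nat.choose (n + 1) (b + 1) = (n + 1) * Nat.choose n b := by
    rw [mul_comm]
    exact (Nat.add_one_mul_choose_eq n b).symm
  have h2 : (b + 1) * Nat.choose n (b + 1) = (n - b) * Nat.choose n b := by
    rw [mul_comm, Nat.choose_succ_right_eq, mul_comm]
  rw [h1, h2]
  rcases le_or_gt b n with h | h
  · rw [← Nat.add_mul]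
    have : n - b + (b + j) = n + j := by omega
    rw [this]
    ring
  · rw [Nat.choose_eq_zero_of_lt h]
    simp

lemma vand (S j s : ℕ) (hs : 1 ≤ s) (hjS : j ≤ S) :
    ∑ ℓ ∈ Icc (max (j+1) s) (j + s),
        Nat.choose (S - j) (ℓ - 1 - j) * Nat.choose j (ℓ - s) = Nat.choose S (s - 1) := by
  have step1 : ∑ ℓ ∈ Icc (max (j+1) s) (j + s),
      Nat.choose (S - j) (ℓ - 1 - j) * Nat.choose j (ℓ - s)
      = ∑ ℓ ∈ Icc (max (j+1) s) (j + s),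
      Nat.choose (S - j) (ℓ - 1 - j) * Nat.choose j (j + s - ℓ) := by
    apply Finset.sum_congr rfl
    intro ℓ hℓ
    rw [Finset.mem_Icc] at hℓ
    have hsl : s ≤ ℓ := le_trans (le_max_right _ _) hℓ.1
    have h1 : ℓ - s ≤ j := by omega
    have h2 : j - (ℓ - s) = j + s - ℓ := by omega
    rw [← Nat.choose_symm h1, h2]
  rw [step1]
  have step2 : ∑ ℓ ∈ Icc (max (j+1) s) (j + s),
      Nat.choose (S - j) (ℓ - 1 - j) * Nat.choose j (j + s - ℓ)
      = ∑ ℓ ∈ Icc (j+1) (j + s),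
      Nat.choose (S - j) (ℓ - 1 - j) * Nat.choose j (j + s - ℓ) := by
    apply Finset.sum_subset
    · apply Finset.Icc_subset_Icc_left
      exact le_max_left _ _
    · intro ℓ hℓ hℓ'
      rw [Finset.mem_Icc] at hℓ
      rw [Finset.mem_Icc, not_and_or] at hℓ'
      have : ℓ < s := by omega
      have : j < j + s - ℓ := by omega
      rw [Nat.choose_eq_zero_of_lt this, mul_zero]
  rw [step2]
  have step3 : Icc (j+1) (j+s) = Ico (j+1) (j+s+1) := by
    rw [Finset.Ico_add_one_right_eq_Icc]
  rw [step3, Finset.sum_Ico_eq_sum_range]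
  have hrange : j + s + 1 - (j + 1) = s := by omega
  rw [hrange]
  have step4 : ∀ i ∈ Finset.range s,
      Nat.choose (S - j) (j + 1 + i - 1 - j) * Nat.choose j (j + s - (j + 1 + i))
      = Nat.choose (S - j) i * Nat.choose j (s - 1 - i) := by
    intro i hi
    rw [Finset.mem_range] at hi
    congr 1
    · congr 1; omega
    · congr 1; omega
  rw [Finset.sum_congr rfl step4]
  have key : Nat.choose ((S - j) + j) (s - 1)
      = ∑ k ∈ Finset.range ((s-1)+1), Nat.choose (S - j) k * Nat.choose j (s - 1 - k) := by
    rw [Nat.add_choose_eq, Finset.Nat.sum_antidiagonal_eq_sum_range_succ_mk]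
  have hSj : S - j + j = S := by omega
  have hs1 : s - 1 + 1 = s := by omega
  rw [hSj, hs1] at key
  rw [key]

lemma perterm (S j s ℓ : ℕ) (hj1 : 1 ≤ j) (hjS : j ≤ S) (hℓ : j + 1 ≤ ℓ) (hsl : s ≤ ℓ) :
    (S : ℝ) * ((Nat.choose (S + 1 - j) (ℓ - j) : ℝ) * (Nat.choose j (ℓ - s) : ℝ) *
        (((ℓ : ℝ) - j) / ((ℓ : ℝ) - 1)))
      = ((S : ℝ) + 1 - j) * ((Nat.choose (S - j) (ℓ - j) : ℝ) * (Nat.choose j (ℓ - s) : ℝ) *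
          (((ℓ : ℝ) - j) / ((ℓ : ℝ) - 1)))
        + ((S : ℝ) + 1 - j) * ((Nat.choose (S - j) (ℓ - 1 - j) * Nat.choose j (ℓ - s) : ℕ) : ℝ) := by
  obtain ⟨b, rfl⟩ : ∃ b, ℓ = j + b + 1 := ⟨ℓ - j - 1, by omega⟩
  obtain ⟨n, rfl⟩ : ∃ n, S = j + n := ⟨S - j, by omega⟩
  have e1 : j + n + 1 - j = n + 1 := by omega
  have e2 : j + n - j = n := by omega
  have e3 : j + b + 1 - j = b + 1 := by omega
  have e4 : j + b + 1 - 1 - j = b := by omega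
  rw [e1, e2, e3, e4]
  have key : ((n : ℝ) + j) * (((b : ℝ) + 1) * (Nat.choose (n + 1) (b + 1) : ℝ))
      = ((n : ℝ) + 1) * (((b : ℝ) + 1) * (Nat.choose n (b + 1) : ℝ)
          + ((b : ℝ) + j) * (Nat.choose n b : ℝ)) := by
    exact_mod_cast natlem n j b
  have hd : (j : ℝ) + b + 1 - 1 ≠ 0 := by
    have : (1 : ℝ) ≤ (j : ℝ) := by exact_mod_cast hj1
    have hb : (0 : ℝ) ≤ (b : ℝ) := by positivity
    nlinarith
  push_cast
  field_simp
  ring_nf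
  ring_nf at key
  nlinarith [key, sq_nonneg ((j:ℝ)+b)]

/-- For integers `S₀ ≥ 1`, `s ≥ 2`, and `1 ≤ j ≤ S₀ + 1`, the real
identity
`((S₀+1-j)/S₀) * ( ∑_{ℓ=max(j,s)}^{min(j+s,S₀)} C(S₀-j,ℓ-j) C(j,ℓ-s) (ℓ-j)/(ℓ-1) + C(S₀,s-1) )`
`= ∑_{ℓ=max(j,s)}^{min(j+s,S₀+1)} C(S₀+1-j,ℓ-j) C(j,ℓ-s) (ℓ-j)/(ℓ-1)` holds. -/
theorem cdc_claim2_inductive_identity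
    (S₀ s j : ℕ) (hS₀ : 1 ≤ S₀) (hs : 2 ≤ s) (hj1 : 1 ≤ j) (hj : j ≤ S₀ + 1) :
    (((S₀ : ℝ) + 1 - j) / (S₀ : ℝ)) *
        ((∑ ℓ ∈ Finset.Icc (max j s) (min (j + s) S₀),
            (Nat.choose (S₀ - j) (ℓ - j) : ℝ) * (Nat.choose j (ℓ - s) : ℝ) *
              (((ℓ : ℝ) - j) / ((ℓ : ℝ) - 1))) +
          (Nat.choose S₀ (s - 1) : ℝ))
      = ∑ ℓ ∈ Finset.Icc (max j s) (min (j + s) (S₀ + 1)),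
          (Nat.choose (S₀ + 1 - j) (ℓ - j) : ℝ) * (Nat.choose j (ℓ - s) : ℝ) *
            (((ℓ : ℝ) - j) / ((ℓ : ℝ) - 1)) := by
  by_cases hcase : j ≤ S₀
  swap
  · -- j = S₀ + 1
    have hj' : j = S₀ + 1 := by omega
    subst hj'
    have hX : ((S₀ : ℝ) + 1 - ((S₀ + 1 : ℕ) : ℝ)) = 0 := by push_cast; ring
    rw [hX, zero_div, zero_mul]
    symm
    apply Finset.sum_eq_zero
    intro ℓ hℓ
    rw [Finset.mem_Icc] at hℓ
    have : ℓ = S₀ + 1 := by omega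
    subst this
    rw [sub_self, zero_div, mul_zero]
  · -- main case j ≤ S₀
    set m' := max (j+1) s with hm'
    -- rewrite T sum
    have hT : (∑ ℓ ∈ Finset.Icc (max j s) (min (j + s) S₀),
            (Nat.choose (S₀ - j) (ℓ - j) : ℝ) * (Nat.choose j (ℓ - s) : ℝ) *
              (((ℓ : ℝ) - j) / ((ℓ : ℝ) - 1)))
        = ∑ ℓ ∈ Finset.Icc m' (j + s),
            (Nat.choose (S₀ - j) (ℓ - j) : ℝ) * (Nat.choose j (ℓ - s) : ℝ) *
              (((ℓ : ℝ) - j) / ((ℓ : ℝ) - 1)) := by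
      rw [show (∑ ℓ ∈ Finset.Icc (max j s) (min (j + s) S₀),
            (Nat.choose (S₀ - j) (ℓ - j) : ℝ) * (Nat.choose j (ℓ - s) : ℝ) *
              (((ℓ : ℝ) - j) / ((ℓ : ℝ) - 1)))
          = ∑ ℓ ∈ Finset.Icc (max j s) (j + s),
            (Nat.choose (S₀ - j) (ℓ - j) : ℝ) * (Nat.choose j (ℓ - s) : ℝ) *
              (((ℓ : ℝ) - j) / ((ℓ : ℝ) - 1)) from by
        apply Finset.sum_subset
        · apply Finset.Icc_subset_Icc_right
          exact min_le_left _ _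
        · intro ℓ hℓ hℓ'
          rw [Finset.mem_Icc] at hℓ
          rw [Finset.mem_Icc, not_and_or] at hℓ'
          have h1 : S₀ - j < ℓ - j := by omega
          rw [Nat.choose_eq_zero_of_lt h1]
          push_cast
          ring]
      symm
      apply Finset.sum_subset
      · apply Finset.Icc_subset_Icc_left
        omega
      · intro ℓ hℓ hℓ'
        rw [Finset.mem_Icc] at hℓ
        rw [Finset.mem_Icc, not_and_or] at hℓ'
        have : ℓ = j := by omega
        subst this
        rw [sub_self, zero_div, mul_zero]
    have hR : (∑ ℓ ∈ Finset.Icc (max j s) (min (j + s) (S₀+1)),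
            (Nat.choose (S₀ + 1 - j) (ℓ - j) : ℝ) * (Nat.choose j (ℓ - s) : ℝ) *
              (((ℓ : ℝ) - j) / ((ℓ : ℝ) - 1)))
        = ∑ ℓ ∈ Finset.Icc m' (j + s),
            (Nat.choose (S₀ + 1 - j) (ℓ - j) : ℝ) * (Nat.choose j (ℓ - s) : ℝ) *
              (((ℓ : ℝ) - j) / ((ℓ : ℝ) - 1)) := by
      rw [show (∑ ℓ ∈ Finset.Icc (max j s) (min (j + s) (S₀+1)),
            (Nat.choose (S₀ + 1 - j) (ℓ - j) : ℝ) * (Nat.choose j (ℓ - s) : ℝ) *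
              (((ℓ : ℝ) - j) / ((ℓ : ℝ) - 1)))
          = ∑ ℓ ∈ Finset.Icc (max j s) (j + s),
            (Nat.choose (S₀ + 1 - j) (ℓ - j) : ℝ) * (Nat.choose j (ℓ - s) : ℝ) *
              (((ℓ : ℝ) - j) / ((ℓ : ℝ) - 1)) from by
        apply Finset.sum_subset
        · apply Finset.Icc_subset_Icc_right
          exact min_le_left _ _
        · intro ℓ hℓ hℓ'
          rw [Finset.mem_Icc] at hℓ
          rw [Finset.mem_Icc, not_and_or] at hℓ'
          have h1 : S₀ + 1 - j < ℓ - j := by omega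
          rw [Nat.choose_eq_zero_of_lt h1]
          push_cast
          ring]
      symm
      apply Finset.sum_subset
      · apply Finset.Icc_subset_Icc_left
        omega
      · intro ℓ hℓ hℓ'
        rw [Finset.mem_Icc] at hℓ
        rw [Finset.mem_Icc, not_and_or] at hℓ'
        have : ℓ = j := by omega
        subst this
        rw [sub_self, zero_div, mul_zero]
    rw [hT, hR]
    have hS0ne : (S₀ : ℝ) ≠ 0 := by positivity
    rw [div_mul_eq_mul_div, div_eq_iff hS0ne]
    have hkey : (S₀ : ℝ) *
        (∑ ℓ ∈ Finset.Icc m' (j + s),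
            (Nat.choose (S₀ + 1 - j) (ℓ - j) : ℝ) * (Nat.choose j (ℓ - s) : ℝ) *
              (((ℓ : ℝ) - j) / ((ℓ : ℝ) - 1)))
        = ((S₀ : ℝ) + 1 - j) *
            (∑ ℓ ∈ Finset.Icc m' (j + s),
              (Nat.choose (S₀ - j) (ℓ - j) : ℝ) * (Nat.choose j (ℓ - s) : ℝ) *
                (((ℓ : ℝ) - j) / ((ℓ : ℝ) - 1)))
          + ((S₀ : ℝ) + 1 - j) * (Nat.choose S₀ (s - 1) : ℝ) := by
      have hv : (Nat.choose S₀ (s-1) : ℝ)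
          = ∑ ℓ ∈ Finset.Icc m' (j + s),
              ((Nat.choose (S₀ - j) (ℓ - 1 - j) * Nat.choose j (ℓ - s) : ℕ) : ℝ) := by
        rw [← Nat.cast_sum]
        exact_mod_cast (congrArg (Nat.cast (R := ℝ)) (vand S₀ j s (by omega) hcase)).symm
      rw [hv, Finset.mul_sum, Finset.mul_sum, Finset.mul_sum, ← Finset.sum_add_distrib]
      apply Finset.sum_congr rfl
      intro ℓ hℓ
      rw [Finset.mem_Icc] at hℓ
      exact perterm S₀ j s ℓ hj1 hcase (le_trans (le_max_left _ _) hℓ.1)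
        (le_trans (le_max_right _ _) hℓ.1)
    rw [mul_add]
    rw [mul_comm]
    linarith [hkey]
end

section
/- Let K ≥ 2 and s be integers with 1 ≤ s ≤ K. For an integer r with 1 ≤ r ≤ K, define L_coded(r, s) = ∑_{ℓ = max(r,s)}^{min(r+s, K)} [C(K−r, ℓ−r)·C(r, ℓ−s)/C(K,s)]·(ℓ−r)/(ℓ−1), where C(·,·) denotes the binomial coefficient. Then the sequence r ↦ L_coded(r, s) is discretely convex on {1,…,K}: for every integer j with 2 ≤ j ≤ K−1, L_coded(j−1, s) + L_coded(j+1, s) ≥ 2·L_coded(j, s). -/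
/-!
Realise `r` as the size of a set `R` among `K` nodes. Grouping the `s`-subsets `S` by
`ℓ = |S ∪ R|` (a hypergeometric count) shows that `L_coded(|R|, s)` is the average over `S` of
`f_S(R) = |S \ R| / (|S ∪ R| - 1)`. Each `f_S` is supermodular: for `x ≠ y` outside a nonempty `T`,
`f_S(T ∪ {x}) + f_S(T ∪ {y}) ≤ f_S(T) + f_S(T ∪ {x, y})`, an elementary inequality once split
according to whether `x` and `y` lie in `S`. Averaging over `S` with `|T| = j - 1` gives the
discrete convexity.
-/

open Finset

/-- The communication load `L_coded(r,s)` of the CDC scheme in the cascaded framework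
(converse form): `∑_{ℓ=max(r,s)}^{min(r+s,K)} [C(K-r,ℓ-r) C(r,ℓ-s)/C(K,s)] (ℓ-r)/(ℓ-1)`.
(The term `ℓ = r` contributes `0`, so this agrees with the sum starting at
`max(r+1,s)`.) -/
noncomputable def LcodedConv (K s r : ℕ) : ℝ :=
  ∑ ℓ ∈ Finset.Icc (max r s) (min (r + s) K),
    ((Nat.choose (K - r) (ℓ - r) : ℝ) * (Nat.choose r (ℓ - s) : ℝ) /
        (Nat.choose K s : ℝ)) *
      (((ℓ : ℝ) - r) / ((ℓ : ℝ) - 1))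

/-- `loadRatio #(S \ R) #R = |S \ R| / (|S ∪ R| - 1)`. -/
noncomputable def loadRatio (m t : ℕ) : ℝ := m / (m + t - 1)

lemma loadRatio_add_le (c : ℕ) {t a b : ℕ} (ht : 1 ≤ t) (ha : a ≤ 1) (hb : b ≤ 1) :
    loadRatio (c + b) (t + 1) + loadRatio (c + a) (t + 1) ≤
      loadRatio (c + a + b) t + loadRatio c (t + 2) := by
  have ht : (1 : ℝ) ≤ t := by exact_mod_cast ht
  have hc : (0 : ℝ) ≤ c := c.cast_nonneg
  interval_cases a <;> interval_cases b <;>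
    simp only [loadRatio, Nat.cast_add, Nat.cast_one, Nat.cast_ofNat, add_zero]
  · rcases c.eq_zero_or_pos with rfl | hc
    · simp
    have hc : (1 : ℝ) ≤ c := by exact_mod_cast hc
    rw [div_add_div _ _ (by linarith) (by linarith), div_add_div _ _ (by linarith) (by linarith),
      div_le_div_iff₀ (by nlinarith) (by nlinarith)]
    nlinarith
  all_goals
    rw [div_add_div _ _ (by linarith) (by linarith), div_add_div _ _ (by linarith) (by linarith),
      div_le_div_iff₀ (by nlinarith) (by nlinarith)]
    nlinarith

section

variable {α : Type*} [DecidableEq α]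

lemma card_sdiff_eq_card_sdiff_insert_add {S R : Finset α} {x : α} (hx : x ∉ R) :
    #(S \ R) = #(S \ insert x R) + if x ∈ S then 1 else 0 := by
  rw [sdiff_insert]
  split_ifs with hxS
  · exact (card_erase_add_one (mem_sdiff.2 ⟨hxS, hx⟩)).symm
  · rw [erase_eq_of_notMem fun h => hxS (mem_sdiff.1 h).1, add_zero]

lemma loadRatio_card_sdiff_insert_add_le (S T : Finset α) {x y : α} (hxy : x ≠ y)
    (hx : x ∉ T) (hy : y ∉ T) (hT : T.Nonempty) :
    loadRatio #(S \ insert x T) #(insert x T) + loadRatio #(S \ insert y T) #(insert y T) ≤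
      loadRatio #(S \ T) #T + loadRatio #(S \ insert x (insert y T)) #(insert x (insert y T)) := by
  have hx' : x ∉ insert y T := by simp [hxy, hx]
  have hy' : y ∉ insert x T := by simp [hxy.symm, hy]
  have hT_yT := card_sdiff_eq_card_sdiff_insert_add (S := S) hy
  have hyT_xyT := card_sdiff_eq_card_sdiff_insert_add (S := S) hx'
  have hxT_xyT := card_sdiff_eq_card_sdiff_insert_add (S := S) hy'
  rw [insert_comm] at hxT_xyT
  rw [card_insert_of_notMem hx, card_insert_of_notMem hy, card_insert_of_notMem hx',
    card_insert_of_notMem hy, hxT_xyT, hT_yT, hyT_xyT]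
  refine loadRatio_add_le _ (card_pos.2 hT) ?_ ?_ <;> split_ifs <;> simp

variable [Fintype α]

lemma card_filter_card_sdiff_eq (R : Finset α) {s a : ℕ} (ha : a ≤ s) :
    #{S ∈ (univ : Finset α).powersetCard s | #(S \ R) = a} =
      (Fintype.card α - #R).choose a * (#R).choose (s - a) := by
  rw [← card_compl, ← card_powersetCard, ← card_powersetCard, ← card_product]
  refine card_nbij' (fun S => (S \ R, S ∩ R)) (fun p => p.1 ∪ p.2) ?_ ?_ ?_ ?_
  · intro S hS
    simp only [mem_coe, mem_filter, mem_powersetCard, subset_univ, true_and] at hS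
    simp only [mem_coe, mem_product, mem_powersetCard, subset_compl_iff_disjoint_right]
    have := card_sdiff_add_card_inter S R
    exact ⟨⟨sdiff_disjoint, hS.2⟩, inter_subset_right, by omega⟩
  · rintro ⟨A, B⟩ hAB
    simp only [mem_coe, mem_product, mem_powersetCard, subset_compl_iff_disjoint_right] at hAB
    obtain ⟨⟨hAR, hA⟩, hBR, hB⟩ := hAB
    simp only [mem_coe, mem_filter, mem_powersetCard, subset_univ, true_and]
    rw [card_union_of_disjoint (hAR.mono_right hBR), union_sdiff_distrib,
      sdiff_eq_self_of_disjoint hAR, sdiff_eq_empty_iff_subset.2 hBR, union_empty]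
    omega
  · intro S _
    exact sdiff_union_inter S R
  · rintro ⟨A, B⟩ hAB
    simp only [mem_coe, mem_product, mem_powersetCard, subset_compl_iff_disjoint_right] at hAB
    obtain ⟨⟨hAR, -⟩, hBR, -⟩ := hAB
    simp only [union_sdiff_distrib, sdiff_eq_self_of_disjoint hAR,
      sdiff_eq_empty_iff_subset.2 hBR, union_empty, union_inter_distrib_right,
      disjoint_iff_inter_eq_empty.1 hAR, inter_eq_left.2 hBR, empty_union]

lemma LcodedConv_eq_sum_loadRatio_div (s : ℕ) (R : Finset α) :
    LcodedConv (Fintype.card α) s #R =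
      (∑ S ∈ (univ : Finset α).powersetCard s, loadRatio #(S \ R) #R) /
        (Fintype.card α).choose s := by
  set K := Fintype.card α
  set r := #R
  have h_mapsTo : ∀ S ∈ (univ : Finset α).powersetCard s,
      #(S \ R) + r ∈ Icc (max r s) (min (r + s) K) := by
    intro S hS
    have := card_sdiff_add_card S R
    have := card_le_univ (S ∪ R)
    have := card_sdiff_add_card_inter S R
    have := card_le_card (inter_subset_right (s₁ := S) (s₂ := R))
    rw [mem_powersetCard] at hS
    rw [mem_Icc]
    omega
  rw [← sum_fiberwise_of_maps_to h_mapsTo, LcodedConv, sum_div]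
  refine sum_congr rfl fun ℓ hℓ => ?_
  rw [mem_Icc, max_le_iff, le_min_iff] at hℓ
  have h_fiber : {S ∈ (univ : Finset α).powersetCard s | #(S \ R) + r = ℓ} =
      {S ∈ (univ : Finset α).powersetCard s | #(S \ R) = ℓ - r} :=
    filter_congr fun S _ => by omega
  rw [h_fiber, sum_congr rfl fun S hS => by rw [(mem_filter.1 hS).2], sum_const,
    card_filter_card_sdiff_eq R (by omega),
    Nat.choose_symm_of_eq_add (by omega : r = s - (ℓ - r) + (ℓ - s)), loadRatio, nsmul_eq_mul]
  push_cast [Nat.cast_sub hℓ.1.1]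
  ring

lemma two_mul_LcodedConv_le (s : ℕ) (T : Finset α) {x y : α} (hxy : x ≠ y)
    (hx : x ∉ T) (hy : y ∉ T) (hT : T.Nonempty) :
    2 * LcodedConv (Fintype.card α) s (#T + 1) ≤
      LcodedConv (Fintype.card α) s #T + LcodedConv (Fintype.card α) s (#T + 2) := by
  have hx' : x ∉ insert y T := by simp [hxy, hx]
  calc 2 * LcodedConv (Fintype.card α) s (#T + 1)
      = LcodedConv (Fintype.card α) s #(insert x T) +
          LcodedConv (Fintype.card α) s #(insert y T) := by
        rw [card_insert_of_notMem hx, card_insert_of_notMem hy, two_mul]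
    _ ≤ LcodedConv (Fintype.card α) s #T +
          LcodedConv (Fintype.card α) s #(insert x (insert y T)) := by
        simp only [LcodedConv_eq_sum_loadRatio_div, ← add_div, ← sum_add_distrib]
        gcongr ?_ / _
        exact sum_le_sum fun S _ => loadRatio_card_sdiff_insert_add_le S T hxy hx hy hT
    _ = LcodedConv (Fintype.card α) s #T + LcodedConv (Fintype.card α) s (#T + 2) := by
        rw [card_insert_of_notMem hx', card_insert_of_notMem hy]

end

theorem cdc_cascaded_load_discrete_convex_general
    (K s : ℕ)
    (j : ℕ) (hj2 : 2 ≤ j) (hjK : j ≤ K - 1) :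
    LcodedConv K s (j - 1) + LcodedConv K s (j + 1) ≥ 2 * LcodedConv K s j := by
  obtain ⟨r, rfl⟩ : ∃ r, j = r + 1 := ⟨j - 1, by omega⟩
  let x : Fin K := ⟨r, by omega⟩
  have h := two_mul_LcodedConv_le s (Iio x) (x := x) (y := ⟨r + 1, by omega⟩)
    (by simp [x]) (by simp) (by simp [x]) ⟨⟨0, by omega⟩, mem_Iio.2 (Fin.mk_lt_mk.2 (by omega))⟩
  simpa [Fin.card_Iio, x] using h

/-- For integers `K ≥ 2` and `1 ≤ s ≤ K`, the sequence
`r ↦ L_coded(r,s)` is discretely convex on `{1, …, K}`: for every integer `j` with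
`2 ≤ j ≤ K - 1`, `L_coded(j-1,s) + L_coded(j+1,s) ≥ 2 L_coded(j,s)`. -/
theorem cdc_cascaded_load_discrete_convex
    (K s : ℕ) (hK : 2 ≤ K) (hs1 : 1 ≤ s) (hsK : s ≤ K)
    (j : ℕ) (hj2 : 2 ≤ j) (hjK : j ≤ K - 1) :
    LcodedConv K s (j - 1) + LcodedConv K s (j + 1) ≥ 2 * LcodedConv K s j :=
  cdc_cascaded_load_discrete_convex_general K s j hj2 hjK
end
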